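/- arXiv:1803.05042 — 4 statements merged into one kernel-verified Lean document; each statement's English description precedes it below -/
import Mathlib

section
/- Let U be an n × r real matrix and for T ⊆ {1,...,n} let U(T) be the submatrix of rows indexed by T. Then the function φ(T) = log det(U(T) U(T)ᵀ) is submodular on subsets T for which U(T)U(T)ᵀ is positive definite: for A ⊆ B and i ∉ B with all relevant Gram matrices positive definite, φ(A ∪ {i}) − φ(A) ≥ φ(B ∪ {i}) − φ(B). -/
/-!
Adding `i ∉ T` to `T` multiplies `det S_T` by the Schur complement
`s_T(i) = S_ii - c_Tᵀ S_T⁻¹ c_T` (with `c_T = (S_ij)_{j ∈ T}`), so `φ(T ∪ {i}) - φ(T) = log s_T(i)`.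
For positive definite `S_T`, `c_Tᵀ S_T⁻¹ c_T` is the maximum of `2 c_T·x - xᵀ S_T x`; extending
vectors on `A` by zero to `B ⊇ A` preserves this quadratic, so the maximum can only grow with `T`
and `s_T(i)` decreases.
-/

open Matrix Finset

namespace Matrix

section Extend

variable {m p R : Type*} [Fintype m] [Fintype p] [NonUnitalNonAssocCommSemiring R] {f : m → p}

theorem extend_zero_dotProduct (hf : f.Injective) (x : m → R) (v : p → R) :
    Function.extend f x 0 ⬝ᵥ v = x ⬝ᵥ (v ∘ f) :=
  (Fintype.sum_of_injective f hf _ _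
    (fun b hb => by rw [Function.extend_apply' _ _ _ hb, Pi.zero_apply, zero_mul])
    (fun a => by rw [hf.extend_apply, Function.comp_apply])).symm

theorem extend_zero_dotProduct_mulVec_extend_zero (hf : f.Injective) (x : m → R)
    (M : Matrix p p R) :
    Function.extend f x 0 ⬝ᵥ M *ᵥ Function.extend f x 0 = x ⬝ᵥ M.submatrix f f *ᵥ x := by
  rw [extend_zero_dotProduct hf]
  congr 1
  funext a
  change M (f a) ⬝ᵥ Function.extend f x 0 = (fun b => M (f a) (f b)) ⬝ᵥ x
  rw [dotProduct_comm, extend_zero_dotProduct hf, dotProduct_comm]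
  rfl

end Extend

theorem PosDef.isGreatest_dotProduct_inv_mulVec {m : Type*} [Fintype m] [DecidableEq m]
    {M : Matrix m m ℝ} (hM : M.PosDef) (c : m → ℝ) :
    IsGreatest (Set.range fun x => 2 * (c ⬝ᵥ x) - x ⬝ᵥ M *ᵥ x) (c ⬝ᵥ M⁻¹ *ᵥ c) := by
  have hsymm : ∀ x y, x ⬝ᵥ M *ᵥ y = y ⬝ᵥ M *ᵥ x := fun x y => by
    rw [dotProduct_mulVec, ← mulVec_transpose, (isHermitian_iff_isSymm.mp hM.isHermitian).eq,
      dotProduct_comm]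
  set z := M⁻¹ *ᵥ c
  have hz : M *ᵥ z = c := by
    rw [mulVec_mulVec, mul_nonsing_inv _ hM.det_pos.ne'.isUnit, one_mulVec]
  have hvalue : ∀ x, 2 * (c ⬝ᵥ x) - x ⬝ᵥ M *ᵥ x = c ⬝ᵥ z - (x - z) ⬝ᵥ M *ᵥ (x - z) := by
    intro x
    rw [mulVec_sub, dotProduct_sub, sub_dotProduct, sub_dotProduct, hz, hsymm z x, hz,
      dotProduct_comm z c, dotProduct_comm x c]
    ring
  refine ⟨⟨z, by simp [hvalue]⟩, ?_⟩
  rintro _ ⟨x, rfl⟩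
  simp only [hvalue]
  exact sub_le_self _ (hM.posSemidef.dotProduct_mulVec_nonneg _)

variable {ι : Type*}

def principalSubmatrix {K : Type*} (S : Matrix ι ι K) (T : Finset ι) : Matrix T T K :=
  S.submatrix (↑) (↑)

variable [DecidableEq ι]

noncomputable def schurCompl {K : Type*} [Field K] (S : Matrix ι ι K) (T : Finset ι) (i : ι) : K :=
  S i i - (fun j : T => S i j) ⬝ᵥ (S.principalSubmatrix T)⁻¹ *ᵥ (fun j : T => S j i)

theorem det_principalSubmatrix_insert {K : Type*} [Field K] {S : Matrix ι ι K} {T : Finset ι}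
    {i : ι} (hi : i ∉ T) (hT : IsUnit (S.principalSubmatrix T).det) :
    (S.principalSubmatrix (insert i T)).det = (S.principalSubmatrix T).det * S.schurCompl T i := by
  let e : T ⊕ Unit ≃ (insert i T : Finset ι) :=
    ((subtypeInsertEquivOption hi).trans (Equiv.optionEquivSumPUnit.{0} T)).symm
  have hblock : (S.principalSubmatrix (insert i T)).submatrix e e =
      fromBlocks (S.principalSubmatrix T) (of fun (j : T) (_ : Unit) => S j i)
        (of fun (_ : Unit) (j : T) => S i j) (of fun _ _ => S i i) := by
    ext (a | a) (b | b) <;> rfl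
  have := invertibleOfIsUnitDet _ hT
  rw [← det_submatrix_equiv_self e, hblock, det_fromBlocks₁₁, invOf_eq_nonsing_inv]
  congr 1
  rw [det_unique]
  simp only [schurCompl, sub_apply, of_apply, mul_apply, dotProduct, mulVec, Finset.sum_mul,
    Finset.mul_sum]
  rw [sum_comm]
  exact congrArg _ (sum_congr rfl fun _ _ => sum_congr rfl fun _ _ => by ring)

theorem schurCompl_pos {S : Matrix ι ι ℝ} {T : Finset ι} {i : ι} (hi : i ∉ T)
    (hT : (S.principalSubmatrix T).PosDef) (hTi : (S.principalSubmatrix (insert i T)).PosDef) :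
    0 < S.schurCompl T i := by
  have h := hTi.det_pos
  rw [det_principalSubmatrix_insert hi hT.det_pos.ne'.isUnit] at h
  exact pos_of_mul_pos_right h hT.det_pos.le

theorem log_det_principalSubmatrix_insert_sub {S : Matrix ι ι ℝ} {T : Finset ι} {i : ι}
    (hi : i ∉ T) (hT : (S.principalSubmatrix T).PosDef)
    (hTi : (S.principalSubmatrix (insert i T)).PosDef) :
    Real.log (S.principalSubmatrix (insert i T)).det - Real.log (S.principalSubmatrix T).det =
      Real.log (S.schurCompl T i) := by
  rw [det_principalSubmatrix_insert hi hT.det_pos.ne'.isUnit,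
    Real.log_mul hT.det_pos.ne' (schurCompl_pos hi hT hTi).ne', add_sub_cancel_left]

theorem schurCompl_antitone {S : Matrix ι ι ℝ} (hS : S.IsSymm) {A B : Finset ι} (hAB : A ⊆ B)
    (hA : (S.principalSubmatrix A).PosDef) (hB : (S.principalSubmatrix B).PosDef) (i : ι) :
    S.schurCompl B i ≤ S.schurCompl A i := by
  have hcol : ∀ T : Finset ι, (fun j : T => S j i) = fun j : T => S i j :=
    fun T => funext fun j => hS.apply i j
  let incl : A → B := fun j => ⟨j, hAB j.2⟩
  have hincl : incl.Injective := fun a b h => Subtype.ext (congrArg Subtype.val h :)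
  obtain ⟨⟨x, hx⟩, -⟩ := hA.isGreatest_dotProduct_inv_mulVec fun j : A => S i j
  have hle := (hB.isGreatest_dotProduct_inv_mulVec fun j : B => S i j).2
    ⟨Function.extend incl x 0, rfl⟩
  dsimp only at hx hle
  rw [dotProduct_comm, extend_zero_dotProduct hincl,
    extend_zero_dotProduct_mulVec_extend_zero hincl, dotProduct_comm] at hle
  simp only [schurCompl, hcol]
  exact sub_le_sub_left (hx ▸ hle) _

end Matrix

/-- The log-Gramian `φ(T) = log det (U(T) U(T)ᵀ)` of selected rows of `U` is
submodular on sets whose Gram matrices are positive definite. -/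
theorem stmt_11 {n r : ℕ} (U : Matrix (Fin n) (Fin r) ℝ)
    (φ : Finset (Fin n) → ℝ)
    (hφ : ∀ T : Finset (Fin n),
      φ T = Real.log (((U * U.transpose).submatrix
        (fun j : T => (j : Fin n)) (fun j : T => (j : Fin n))).det))
    (A B : Finset (Fin n)) (i : Fin n) (hAB : A ⊆ B) (hi : i ∉ B)
    (hpd : ∀ T : Finset (Fin n), T ⊆ insert i B →
      ((U * U.transpose).submatrix
        (fun j : T => (j : Fin n)) (fun j : T => (j : Fin n))).PosDef) :
    φ (insert i B) - φ B ≤ φ (insert i A) - φ A := by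
  set S := U * Uᵀ
  have hφ' (T : Finset (Fin n)) : φ T = Real.log (S.principalSubmatrix T).det := hφ T
  have hpd' (T : Finset (Fin n)) (hT : T ⊆ insert i B) : (S.principalSubmatrix T).PosDef :=
    hpd T hT
  have hA := hpd' A (hAB.trans (subset_insert i B))
  have hB := hpd' B (subset_insert i B)
  have hiA := hpd' _ (insert_subset_insert i hAB)
  have hiB := hpd' _ subset_rfl
  rw [hφ', hφ', hφ', hφ', log_det_principalSubmatrix_insert_sub hi hB hiB,
    log_det_principalSubmatrix_insert_sub (fun h => hi (hAB h)) hA hiA]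
  exact Real.log_le_log (schurCompl_pos hi hB hiB)
    (schurCompl_antitone (transpose_mul U Uᵀ) hAB hA hB i)
end

section
/- Let J : 2^E → ℝ≥0 be a monotone non-increasing set function with submodularity ratio γ₀ > 0 at relevant sets, and let S* and S be bases of a matroid on E with |S*| = |S| = m − r. Suppose the greedy algorithm produces sets ∅ = S₀ ⊆ S₁ ⊆ ... ⊆ S_t = S where at step i the element maximizing J(S_{i−1}) − J(S_{i−1} ∪ {v}) among feasible v is added. Then J(S) ≤ (|S*| − γ₀) J(S_{t−1}) + γ₀ J(S*), where S_{t−1} is the set at the second-to-last iteration. -/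
/-- Optimality bound for the greedy stage of the islanding algorithm: if `J` is
a nonnegative monotone non-increasing set function with submodularity ratio at
least `γ₀ > 0` at the relevant sets, `S*` and `S` are matroid bases of size
`m - r`, and `S` is produced greedily, then
`J(S) ≤ (|S*| - γ₀) J(S_{t-1}) + γ₀ J(S*)`. -/
theorem stmt_14 {E : Type*} [DecidableEq E] [Fintype E]
    (Indep : Finset E → Prop)
    (h_empty : Indep ∅)
    (h_down : ∀ A B : Finset E, Indep B → A ⊆ B → Indep A)
    (h_exch : ∀ A B : Finset E, Indep A → Indep B → A.card < B.card →
      ∃ v ∈ B \ A, Indep (insert v A))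
    (J : Finset E → ℝ)
    (hnonneg : ∀ A : Finset E, 0 ≤ J A)
    (hmono : ∀ A B : Finset E, A ⊆ B → J B ≤ J A)
    (m r : ℕ) (γ₀ : ℝ) (hγ₀ : 0 < γ₀)
    (Sstar S : Finset E)
    (hSstar : Indep Sstar ∧ ∀ C, Indep C → Sstar ⊆ C → Sstar = C)
    (hSbasis : Indep S ∧ ∀ C, Indep C → S ⊆ C → S = C)
    (hcardstar : Sstar.card = m - r) (hcard : S.card = m - r)
    -- submodularity ratio at the relevant sets:
    (hratio : ∀ L S' : Finset E, L ⊆ S → S'.card ≤ S.card →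
      γ₀ * (J L - J (L ∪ S')) ≤ ∑ z ∈ S', (J L - J (insert z L)))
    -- the greedy algorithm produces the chain `Sc 0 = ∅ ⊆ ⋯ ⊆ Sc t = S`:
    (t : ℕ) (ht : 1 ≤ t) (Sc : ℕ → Finset E)
    (h0 : Sc 0 = ∅) (hlast : Sc t = S)
    (hgreedy : ∀ i < t, ∃ e ∉ Sc i,
      Sc (i + 1) = insert e (Sc i) ∧ Indep (Sc (i + 1)) ∧
      ∀ w : E, Indep (insert w (Sc i)) →
        J (Sc i) - J (insert w (Sc i)) ≤ J (Sc i) - J (Sc (i + 1))) :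
    J S ≤ ((Sstar.card : ℝ) - γ₀) * J (Sc (t - 1)) + γ₀ * J Sstar := by
  set L := Sc (t - 1) with hL
  obtain ⟨e, heL, hSceq, hIndepSct, hmax⟩ := hgreedy (t - 1) (by omega)
  have ht1 : t - 1 + 1 = t := by omega
  rw [ht1] at hSceq hIndepSct hmax
  have hLS : L ⊆ S := by rw [← hlast, hSceq]; exact Finset.subset_insert _ _
  have hIndepL : Indep L := h_down L S hSbasis.1 hLS
  have hcardL : L.card < Sstar.card := by
    have : S.card = L.card + 1 := by
      rw [← hlast, hSceq, Finset.card_insert_of_notMem heL]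
    omega
  obtain ⟨estar, hestar, hIndepe⟩ := h_exch L Sstar hIndepL hSstar.1 hcardL
  have hestarS : estar ∈ Sstar := (Finset.mem_sdiff.mp hestar).1
  have hgr : J L - J (insert estar L) ≤ J L - J S := by
    have := hmax estar hIndepe
    rwa [hlast] at this
  have hsum := hratio L Sstar hLS (by omega)
  have hsplit : ∑ z ∈ Sstar, (J L - J (insert z L))
      = (J L - J (insert estar L)) + ∑ z ∈ Sstar.erase estar, (J L - J (insert z L)) :=
    (Finset.add_sum_erase _ _ hestarS).symm
  have hsum2 : ∑ z ∈ Sstar.erase estar, (J L - J (insert z L))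
      ≤ ((Sstar.erase estar).card : ℝ) * J L := by
    calc ∑ z ∈ Sstar.erase estar, (J L - J (insert z L))
        ≤ ∑ _z ∈ Sstar.erase estar, J L := by
          refine Finset.sum_le_sum fun z _ => ?_
          have := hnonneg (insert z L); linarith
      _ = ((Sstar.erase estar).card : ℝ) * J L := by
          rw [Finset.sum_const, nsmul_eq_mul]
  have hone : 1 ≤ Sstar.card := Finset.card_pos.mpr ⟨estar, hestarS⟩
  have hcarderase : ((Sstar.erase estar).card : ℝ) = (Sstar.card : ℝ) - 1 := by
    rw [Finset.card_erase_of_mem hestarS]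
    push_cast [Nat.cast_sub hone]
    ring
  have hmonostar : γ₀ * (J L - J Sstar) ≤ γ₀ * (J L - J (L ∪ Sstar)) := by
    have := hmono Sstar (L ∪ Sstar) Finset.subset_union_right
    nlinarith
  rw [hcarderase] at hsum2
  linarith
end

section
/- Let A ∈ ℝ^{m×l} have columns a₁,...,a_l, each with Euclidean norm √2, and let b ∈ ℝ^m. Define f(S) = ‖b‖² − (projection of b onto span{a_i : i ∈ S})‖² = min_x ‖A(S)x − b‖². Then for disjoint L, S ⊆ {1,...,l}, ∑_{z∈S} (f(L) − f(L∪{z})) ≥ λ_min(AᵀA/2, |L| + |S|) · (f(L) − f(L ∪ S)), where λ_min(C, k) = min_{|T|=k} λ_min(C(T)) is the smallest k-sparse eigenvalue of C = AᵀA/2. -/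
/-!
Write `V_T` for the span of the columns indexed by `T`, `p` for the projection of `b` onto `V_L`,
`r = b - p` and `c_j = ⟪r, a_j⟫`, so that `c_j = 0` for `j ∈ L`. Moving `p` along a single column
`a_z` shows that adding `z` to `L` lowers the residual by at least `c_z² / ‖a_z‖²`. By
Pythagoras, `f L - f (L ∪ S) = ‖w‖²` with `w = P_{V_{L ∪ S}} b - p = ∑ x_j a_j` supported on
`L ∪ S`, and `‖w‖² = ⟪r, w⟫ = ∑_{j ∈ S} x_j c_j`. Cauchy–Schwarz then gives
`‖w‖⁴ ≤ ‖x‖² ∑_{j ∈ S} c_j²`, while the sparse eigenvalue bound gives `λ ‖x‖² ≤ ‖w‖² / 2`;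
together, `λ ‖w‖² ≤ ∑_{j ∈ S} c_j² / 2`.
-/

open Finset Submodule
open scoped RealInnerProductSpace

section Projection

variable {E : Type*} [NormedAddCommGroup E] [InnerProductSpace ℝ E]
  (K : Submodule ℝ E) [K.HasOrthogonalProjection] (y : E) {x : E}

theorem norm_sub_sq_eq_norm_sub_starProjection_sq_add (hx : x ∈ K) :
    ‖y - x‖ ^ 2 = ‖y - K.starProjection y‖ ^ 2 + ‖K.starProjection y - x‖ ^ 2 := by
  rw [← sub_add_sub_cancel y (K.starProjection y) x]
  simp only [sq]
  exact norm_add_sq_eq_norm_sq_add_norm_sq_real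
    (K.starProjection_inner_eq_zero y _ (K.sub_mem (K.starProjection_apply_mem y) hx))

theorem norm_sub_starProjection_sq_le (hx : x ∈ K) :
    ‖y - K.starProjection y‖ ^ 2 ≤ ‖y - x‖ ^ 2 := by
  rw [norm_sub_sq_eq_norm_sub_starProjection_sq_add K y hx]
  exact le_add_of_nonneg_right (sq_nonneg _)

theorem inner_sub_starProjection_sub (hx : x ∈ K) :
    ⟪y - x, K.starProjection y - x⟫ = ‖K.starProjection y - x‖ ^ 2 := by
  rw [← sub_add_sub_cancel y (K.starProjection y) x, inner_add_left,
    K.starProjection_inner_eq_zero y _ (K.sub_mem (K.starProjection_apply_mem y) hx), zero_add,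
    real_inner_self_eq_norm_sq]

theorem inner_sq_div_le_norm_sub_sq_sub (hx : x ∈ K) {a : E} (ha : a ∈ K) {ν : ℝ} (hν : 0 < ν)
    (haν : ‖a‖ ^ 2 ≤ ν) :
    ⟪y - x, a⟫ ^ 2 / ν ≤ ‖y - x‖ ^ 2 - ‖y - K.starProjection y‖ ^ 2 := by
  set c := ⟪y - x, a⟫
  have hstep := norm_sub_starProjection_sq_le K y (K.add_mem hx (K.smul_mem (c / ν) ha))
  have hexpand : ‖y - (x + (c / ν) • a)‖ ^ 2 =
      ‖y - x‖ ^ 2 - 2 * (c ^ 2 / ν) + (c / ν) ^ 2 * ‖a‖ ^ 2 := by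
    rw [← sub_sub, norm_sub_sq_real, real_inner_smul_right, norm_smul, mul_pow, Real.norm_eq_abs,
      sq_abs]
    ring
  have hquad : (c / ν) ^ 2 * ‖a‖ ^ 2 ≤ c ^ 2 / ν := by
    calc (c / ν) ^ 2 * ‖a‖ ^ 2 ≤ (c / ν) ^ 2 * ν := by gcongr
      _ = c ^ 2 / ν := by field_simp
  linarith

end Projection

theorem Submodule.mem_span_image_finset_iff_exists_supported {R M ι : Type*} [Semiring R]
    [AddCommMonoid M] [Module R M] [Fintype ι] [DecidableEq ι] {v : ι → M} {s : Finset ι} {w : M} :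
    w ∈ span R (v '' s) ↔ ∃ c : ι → R, (∀ i ∉ s, c i = 0) ∧ ∑ i, c i • v i = w := by
  rw [mem_span_image_finset_iff_exists_fun']
  constructor
  · rintro ⟨c, rfl⟩
    refine ⟨fun i ↦ if i ∈ s then c i else 0, fun i hi ↦ if_neg hi, ?_⟩
    simp only [ite_smul, zero_smul, sum_ite_mem, univ_inter]
  · rintro ⟨c, hc, rfl⟩
    exact ⟨c, sum_subset (subset_univ s) fun i _ hi ↦ by rw [hc i hi, zero_smul]⟩

theorem Finset.sum_coe_sort_quadratic_of_supported {ι R : Type*} [Fintype ι] [CommSemiring R]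
    {s : Finset ι} {x : ι → R} (hx : ∀ i ∉ s, x i = 0) (g : ι → ι → R) :
    ∑ i : s, ∑ j : s, x i * g i j * x j = ∑ i, ∑ j, x i * g i j * x j := by
  calc ∑ i : s, ∑ j : s, x i * g i j * x j = ∑ i ∈ s, ∑ j ∈ s, x i * g i j * x j := by
        rw [← sum_coe_sort s]
        exact sum_congr rfl fun i _ ↦ sum_coe_sort s fun j ↦ x i * g i j * x j
    _ = ∑ i ∈ s, ∑ j, x i * g i j * x j := sum_congr rfl fun i _ ↦
        sum_subset (subset_univ s) fun j _ hj ↦ by rw [hx j hj, mul_zero]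
    _ = ∑ i, ∑ j, x i * g i j * x j := sum_subset (subset_univ s) fun i _ hi ↦
        sum_eq_zero fun j _ ↦ by rw [hx i hi, zero_mul, zero_mul]

theorem mul_le_div_of_sq_le_mul {lam ν g X Q : ℝ} (hν : 0 < ν) (hg : 0 ≤ g) (hQ : 0 ≤ Q)
    (hX : lam * X ≤ g / ν) (hgX : g ^ 2 ≤ X * Q) : lam * g ≤ Q / ν := by
  rcases le_or_gt lam 0 with hlam | hlam
  · exact (mul_nonpos_of_nonpos_of_nonneg hlam hg).trans (by positivity)
  rcases hg.eq_or_lt with rfl | hg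
  · rw [mul_zero]
    positivity
  rw [le_div_iff₀ hν] at hX ⊢
  refine le_of_mul_le_mul_right ?_ hg
  nlinarith [mul_le_mul_of_nonneg_left hgX hlam.le, mul_le_mul_of_nonneg_right hX hQ]

section Residual

variable {E ι : Type*} [NormedAddCommGroup E] [InnerProductSpace ℝ E]

instance (a : ι → E) (s : Finset ι) : (span ℝ (a '' s)).HasOrthogonalProjection :=
  haveI := FiniteDimensional.span_of_finite ℝ (s.finite_toSet.image a)
  inferInstance

noncomputable def lsResidual (a : ι → E) (b : E) (s : Finset ι) : ℝ :=
  ‖b - (span ℝ (a '' s)).starProjection b‖ ^ 2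

variable [Fintype ι] [DecidableEq ι]

theorem isLeast_lsResidual (a : ι → E) (b : E) (s : Finset ι) :
    IsLeast {t | ∃ x : ι → ℝ, (∀ i ∉ s, x i = 0) ∧ t = ‖∑ i, x i • a i - b‖ ^ 2}
      (lsResidual a b s) := by
  constructor
  · obtain ⟨x, hx, hxb⟩ := mem_span_image_finset_iff_exists_supported.mp
      ((span ℝ (a '' s)).starProjection_apply_mem b)
    exact ⟨x, hx, by rw [lsResidual, hxb, norm_sub_rev]⟩
  · rintro t ⟨x, hx, rfl⟩
    rw [norm_sub_rev]
    exact norm_sub_starProjection_sq_le _ b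
      (mem_span_image_finset_iff_exists_supported.mpr ⟨x, hx, rfl⟩)

theorem mul_lsResidual_sub_le_sum (a : ι → E) (b : E) {L S : Finset ι} (hLS : Disjoint L S)
    {ν lam : ℝ} (hν : 0 < ν) (ha : ∀ j ∈ S, ‖a j‖ ^ 2 ≤ ν)
    (hlam : ∀ x : ι → ℝ, (∀ j ∉ L ∪ S, x j = 0) →
      lam * ∑ j ∈ L ∪ S, x j ^ 2 ≤ ‖∑ j, x j • a j‖ ^ 2 / ν) :
    lam * (lsResidual a b L - lsResidual a b (L ∪ S)) ≤
      ∑ z ∈ S, (lsResidual a b L - lsResidual a b (insert z L)) := by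
  set p := (span ℝ (a '' L)).starProjection b
  set c : ι → ℝ := fun j ↦ ⟪b - p, a j⟫
  set w := (span ℝ (a '' ↑(L ∪ S))).starProjection b - p
  have hmono : ∀ {T : Finset ι}, L ⊆ T → p ∈ span ℝ (a '' T) := fun hT ↦
    span_mono (Set.image_mono (coe_subset.mpr hT)) (starProjection_apply_mem _ b)
  have hgain : ∀ z ∈ S, c z ^ 2 / ν ≤ lsResidual a b L - lsResidual a b (insert z L) :=
    fun z hz ↦ inner_sq_div_le_norm_sub_sq_sub _ b (hmono (subset_insert z L))
      (subset_span ⟨z, mem_insert_self z L, rfl⟩) hν (ha z hz)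
  have hdiff : lsResidual a b L - lsResidual a b (L ∪ S) = ‖w‖ ^ 2 := by
    rw [lsResidual, norm_sub_sq_eq_norm_sub_starProjection_sq_add _ b (hmono subset_union_left),
      lsResidual]
    ring
  obtain ⟨x, hx, hxw⟩ : ∃ x : ι → ℝ, (∀ j ∉ L ∪ S, x j = 0) ∧ ∑ j, x j • a j = w :=
    mem_span_image_finset_iff_exists_supported.mp
      (sub_mem (starProjection_apply_mem _ b) (hmono subset_union_left))
  have hcL : ∀ j ∈ L, c j = 0 := fun j hj ↦
    starProjection_inner_eq_zero b (a j) (subset_span ⟨j, hj, rfl⟩)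
  have hw : ‖w‖ ^ 2 = ∑ j ∈ S, x j * c j := by
    calc ‖w‖ ^ 2 = ⟪b - p, w⟫ :=
          (inner_sub_starProjection_sub _ b (hmono subset_union_left)).symm
      _ = ∑ j, x j * c j := by simp only [← hxw, inner_sum, real_inner_smul_right, c]
      _ = ∑ j ∈ L ∪ S, x j * c j :=
        (sum_subset (subset_univ _) fun j _ hj ↦ by rw [hx j hj, zero_mul]).symm
      _ = ∑ j ∈ S, x j * c j := by
        rw [sum_union hLS, sum_eq_zero fun j hj ↦ by rw [hcL j hj, mul_zero], zero_add]
  have hQ : 0 ≤ ∑ j ∈ S, c j ^ 2 := sum_nonneg fun j _ ↦ sq_nonneg _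
  have hCS : (‖w‖ ^ 2) ^ 2 ≤ (∑ j ∈ L ∪ S, x j ^ 2) * ∑ j ∈ S, c j ^ 2 := by
    rw [hw]
    exact (sum_mul_sq_le_sq_mul_sq S x c).trans (mul_le_mul_of_nonneg_right
      (sum_le_sum_of_subset_of_nonneg subset_union_right fun j _ _ ↦ sq_nonneg _) hQ)
  have hray : lam * ∑ j ∈ L ∪ S, x j ^ 2 ≤ ‖w‖ ^ 2 / ν := hxw ▸ hlam x hx
  calc lam * (lsResidual a b L - lsResidual a b (L ∪ S)) = lam * ‖w‖ ^ 2 := by rw [hdiff]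
    _ ≤ (∑ j ∈ S, c j ^ 2) / ν := mul_le_div_of_sq_le_mul hν (sq_nonneg _) hQ hray hCS
    _ = ∑ j ∈ S, c j ^ 2 / ν := sum_div ..
    _ ≤ _ := sum_le_sum hgain

end Residual

namespace Matrix

variable {m n : Type*} (A : Matrix m n ℝ)

def euclideanCol (j : n) : EuclideanSpace ℝ m := WithLp.toLp 2 (Aᵀ j)

theorem norm_euclideanCol_sq [Fintype m] (j : n) : ‖A.euclideanCol j‖ ^ 2 = ∑ i, A i j ^ 2 :=
  EuclideanSpace.real_norm_sq_eq _

theorem sum_smul_euclideanCol [Fintype n] (x : n → ℝ) :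
    ∑ j, x j • A.euclideanCol j = WithLp.toLp 2 (A *ᵥ x) := by
  ext i
  simp [euclideanCol, mulVec, dotProduct, mul_comm]

theorem norm_toLp_mulVec_sq [Fintype m] [Fintype n] (x : n → ℝ) :
    ‖WithLp.toLp 2 (A *ᵥ x)‖ ^ 2 = ∑ i, ∑ j, x i * (Aᵀ * A) i j * x j := by
  rw [EuclideanSpace.real_norm_sq_eq]
  calc ∑ i, (A *ᵥ x) i ^ 2 = x ⬝ᵥ (Aᵀ * A) *ᵥ x := by
        rw [← mulVec_mulVec, dotProduct_mulVec, vecMul_transpose]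
        simp [dotProduct, sq]
    _ = _ := by simp [dotProduct, mulVec, mul_sum, mul_assoc]

end Matrix

/-- Das–Kempe spectral lower bound: for a matrix `A` whose columns all have
norm `√2`, the least-squares residual function
`f S = min { ‖A x - b‖² : x supported on S }` satisfies, for disjoint `L, S`,
`∑_{z∈S} (f L - f (L ∪ {z})) ≥ lam · (f L - f (L ∪ S))` whenever `lam` is a
lower bound on the Rayleigh quotients of all `(|L|+|S|)`-sparse principal
submatrices of `C = AᵀA / 2` (in particular for the smallest
`(|L|+|S|)`-sparse eigenvalue `λ_min(C, |L|+|S|)` of `C`). -/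
theorem stmt_16 {m l : ℕ} (A : Matrix (Fin m) (Fin l) ℝ) (b : Fin m → ℝ)
    (hcol : ∀ j : Fin l, ∑ i, (A i j) ^ 2 = 2)
    (f : Finset (Fin l) → ℝ)
    (hf : ∀ S : Finset (Fin l),
      f S = sInf {t : ℝ | ∃ x : Fin l → ℝ, (∀ i ∉ S, x i = 0) ∧
        t = ∑ j, (A.mulVec x j - b j) ^ 2})
    (L S : Finset (Fin l)) (hLS : Disjoint L S)
    (lam : ℝ)
    (hlam : ∀ T : Finset (Fin l), T.card = L.card + S.card →
      ∀ x : T → ℝ,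
        lam * ∑ j, (x j) ^ 2 ≤
          ∑ j₁ : T, ∑ j₂ : T, x j₁ * (((A.transpose * A) (j₁ : Fin l) (j₂ : Fin l)) / 2) * x j₂) :
    lam * (f L - f (L ∪ S)) ≤ ∑ z ∈ S, (f L - f (insert z L)) := by
  have hres : ∀ T, f T = lsResidual A.euclideanCol (WithLp.toLp 2 b) T := fun T ↦ by
    have hsq : ∀ x : Fin l → ℝ, ∑ j, (A.mulVec x - b) j ^ 2 =
        ‖∑ j, x j • A.euclideanCol j - WithLp.toLp 2 b‖ ^ 2 := fun x ↦ by
      rw [A.sum_smul_euclideanCol, ← WithLp.toLp_sub, EuclideanSpace.real_norm_sq_eq]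
    rw [hf, ← (isLeast_lsResidual _ _ T).csInf_eq]
    simp only [← Pi.sub_apply, hsq]
  simp only [hres]
  refine mul_lsResidual_sub_le_sum _ _ hLS two_pos
    (fun j _ ↦ (A.norm_euclideanCol_sq j).trans_le (hcol j).le) fun x hx ↦ ?_
  calc lam * ∑ j ∈ L ∪ S, x j ^ 2 = lam * ∑ j : ↥(L ∪ S), x j ^ 2 := by
        rw [sum_coe_sort (L ∪ S) fun j ↦ x j ^ 2]
    _ ≤ ∑ i : ↥(L ∪ S), ∑ j : ↥(L ∪ S), x i * ((A.transpose * A) i j / 2) * x j :=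
      hlam _ (card_union_of_disjoint hLS) _
    _ = ∑ i, ∑ j, x i * ((A.transpose * A) i j / 2) * x j :=
      sum_coe_sort_quadratic_of_supported hx fun i j ↦ (A.transpose * A) i j / 2
    _ = ‖∑ j, x j • A.euclideanCol j‖ ^ 2 / 2 := by
      simp only [A.sum_smul_euclideanCol, A.norm_toLp_mulVec_sq, sum_div, mul_div_assoc',
        div_mul_eq_mul_div]
end

section
/- Let f : 2^Ω → ℝ≥0 be monotone non-decreasing and submodular with f(∅) = 0, and let the greedy algorithm pick elements v₁,...,v_r, where v_i maximizes f(T_{i−1} ∪ {v}) − f(T_{i−1}) and T_i = {v₁,...,v_i}. Then f(T_r) ≥ (1 − (1 − 1/r)^r) · max_{|T| = r} f(T) ≥ (1 − 1/e) · max_{|T| = r} f(T). -/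
/-!
Submodularity bounds the gap `f T' - f A` between an `r`-set `T'` and the current greedy set `A`
by the sum of the `r` marginal gains at `A`, each of which is at most the greedy gain. So every
greedy step shrinks the gap by the factor `1 - 1/r`, after `r` steps it is at most
`(1 - 1/r)^r * f T'`, and `(1 - 1/r)^r ≤ e⁻¹`.
-/

open Finset

section Submodular

variable {Ω : Type*} [DecidableEq Ω] {f : Finset Ω → ℝ}

theorem sub_le_sum_marginal_of_submodular
    (hsub : ∀ A B : Finset Ω, A ⊆ B → ∀ v ∉ B, f (insert v B) - f B ≤ f (insert v A) - f A)
    (A S : Finset Ω) :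
    f (A ∪ S) - f A ≤ ∑ v ∈ S, (f (insert v A) - f A) := by
  induction S using Finset.induction_on with
  | empty => simp
  | @insert a S haS ih =>
    have hgain : f (insert a (A ∪ S)) - f (A ∪ S) ≤ f (insert a A) - f A := by
      by_cases ha : a ∈ A ∪ S
      · have haA : a ∈ A := (mem_union.1 ha).resolve_right haS
        simp [insert_eq_of_mem ha, insert_eq_of_mem haA]
      · exact hsub A (A ∪ S) subset_union_left a ha
    rw [sum_insert haS, union_insert]
    linarith

theorem sub_le_card_mul_of_marginal_le
    (hmono : ∀ A B : Finset Ω, A ⊆ B → f A ≤ f B)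
    (hsub : ∀ A B : Finset Ω, A ⊆ B → ∀ v ∉ B, f (insert v B) - f B ≤ f (insert v A) - f A)
    {A S : Finset Ω} {δ : ℝ} (hδ : ∀ w, f (insert w A) - f A ≤ δ) :
    f S - f A ≤ #S * δ :=
  calc f S - f A ≤ f (A ∪ S) - f A := by linarith [hmono S (A ∪ S) subset_union_right]
    _ ≤ ∑ v ∈ S, (f (insert v A) - f A) := sub_le_sum_marginal_of_submodular hsub A S
    _ ≤ ∑ _v ∈ S, δ := sum_le_sum fun w _ => hδ w
    _ = #S * δ := by rw [sum_const, nsmul_eq_mul]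

theorem sub_le_one_sub_inv_card_mul_of_greedy
    (hmono : ∀ A B : Finset Ω, A ⊆ B → f A ≤ f B)
    (hsub : ∀ A B : Finset Ω, A ⊆ B → ∀ v ∉ B, f (insert v B) - f B ≤ f (insert v A) - f A)
    {A A' S : Finset Ω} (hS : S.Nonempty) (hgreedy : ∀ w, f (insert w A) - f A ≤ f A' - f A) :
    f S - f A' ≤ (1 - 1 / #S) * (f S - f A) := by
  have hcard : (0 : ℝ) < #S := by exact_mod_cast hS.card_pos
  have hgap := sub_le_card_mul_of_marginal_le hmono hsub (S := S) hgreedy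
  have hfrac : (f S - f A) / #S ≤ f A' - f A := (div_le_iff₀' hcard).2 hgap
  calc f S - f A' = (f S - f A) - (f A' - f A) := by ring
    _ ≤ (f S - f A) - (f S - f A) / #S := by linarith
    _ = (1 - 1 / #S) * (f S - f A) := by ring

end Submodular

theorem stmt_18_general {Ω : Type*} [DecidableEq Ω]
    (f : Finset Ω → ℝ)
    (h0 : f ∅ = 0)
    (hmono : ∀ A B : Finset Ω, A ⊆ B → f A ≤ f B)
    (hsub : ∀ A B : Finset Ω, A ⊆ B → ∀ v ∉ B,
      f (insert v B) - f B ≤ f (insert v A) - f A)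
    (r : ℕ) (hr : 0 < r)
    (T : ℕ → Finset Ω) (hT0 : T 0 = ∅)
    (hgreedy : ∀ i < r, ∃ v ∉ T i,
      T (i + 1) = insert v (T i) ∧
      ∀ w : Ω, f (insert w (T i)) - f (T i) ≤ f (T (i + 1)) - f (T i)) :
    ∀ T' : Finset Ω, T'.card = r →
      (1 - (1 - 1 / (r : ℝ)) ^ r) * f T' ≤ f (T r) ∧
      (1 - 1 / Real.exp 1) * f T' ≤ f (T r) := by
  intro T' hT'
  have hr1 : (1 : ℝ) ≤ r := by exact_mod_cast hr
  have hq : 0 ≤ 1 - 1 / (r : ℝ) := sub_nonneg.2 (div_le_one_of_le₀ hr1 (Nat.cast_nonneg r))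
  have hgap : f T' - f (T r) ≤ (1 - 1 / (r : ℝ)) ^ r * f T' := by
    simpa [hT0, h0] using le_geom (u := fun i => f T' - f (T i)) hq r fun i hi => by
      obtain ⟨-, -, -, hmax⟩ := hgreedy i hi
      have hstep := sub_le_one_sub_inv_card_mul_of_greedy hmono hsub
        (card_pos.1 (hT' ▸ hr)) hmax
      rwa [hT'] at hstep
  have hexp : (1 - 1 / (r : ℝ)) ^ r ≤ 1 / Real.exp 1 := by
    simpa [Real.exp_neg] using Real.one_sub_div_pow_le_exp_neg hr1
  have hT'_nonneg : 0 ≤ f T' := h0 ▸ hmono ∅ T' (empty_subset T')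
  have hratio : (1 - (1 - 1 / (r : ℝ)) ^ r) * f T' ≤ f (T r) := by linarith
  exact ⟨hratio, le_trans (by gcongr) hratio⟩

/-- Nemhauser–Wolsey–Fisher: greedy maximization of a nonnegative monotone
submodular function `f` with `f ∅ = 0` under a cardinality constraint `r`
achieves at least `(1 - (1 - 1/r)^r) ≥ (1 - 1/e)` of the optimum. -/
theorem stmt_18 {Ω : Type*} [DecidableEq Ω] [Fintype Ω]
    (f : Finset Ω → ℝ)
    (h0 : f ∅ = 0)
    (hnonneg : ∀ A : Finset Ω, 0 ≤ f A)
    (hmono : ∀ A B : Finset Ω, A ⊆ B → f A ≤ f B)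
    (hsub : ∀ A B : Finset Ω, A ⊆ B → ∀ v ∉ B,
      f (insert v B) - f B ≤ f (insert v A) - f A)
    (r : ℕ) (hr : 0 < r)
    (T : ℕ → Finset Ω) (hT0 : T 0 = ∅)
    (hgreedy : ∀ i < r, ∃ v ∉ T i,
      T (i + 1) = insert v (T i) ∧
      ∀ w : Ω, f (insert w (T i)) - f (T i) ≤ f (T (i + 1)) - f (T i)) :
    ∀ T' : Finset Ω, T'.card = r →
      (1 - (1 - 1 / (r : ℝ)) ^ r) * f T' ≤ f (T r) ∧
      (1 - 1 / Real.exp 1) * f T' ≤ f (T r) :=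
  stmt_18_general f h0 hmono hsub r hr T hT0 hgreedy
end
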